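/- For every t > 0 and y ≥ 0 one has K(t,0,y) = 0 and ∂ₓ K(t,x,y)|_{x=0} = 0. Consequently, for every bounded, continuous, integrable f : ℝ₊ → ℝ, the function u(t,x) = ∫₀^∞ K(t,x,y) f(y) dy satisfies the clamped boundary conditions u(t,0) = 0 and ∂ₓ u(t,0) = 0 for all t > 0. -/

import Mathlib

open MeasureTheory Filter Set

/-- `Φ(r) = e^{-r} + sin r - cos r`. -/
noncomputable def Phi (r : ℝ) : ℝ := Real.exp (-r) + Real.sin r - Real.cos r

/-- The clamped biharmonic heat kernel on the half-line. -/
noncomputable def K (t x y : ℝ) : ℝ :=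
  (1 / Real.pi) * ∫ k in Set.Ioi (0:ℝ), Real.exp (-k ^ 4 * t) * Phi (k * x) * Phi (k * y)

/-!
Both boundary conditions come from `Φ(0) = 0` and `Φ'(0) = 0`. For `|x| ≤ 1` and `y ≥ 0` the
integrand of `K` and its `x`-derivative are bounded by `9 e^{2k} e^{-k⁴t} ≤ 9 e^{t+1/t} e^{-tk²}`,
so `K` can be differentiated under the integral sign, and `∂ₓK(t,0,y)` is an integral against
`Φ'(0) = 0`. That derivative is bounded uniformly in `y` and in `x` near `0`, so for integrable `f`
the function `u` can in turn be differentiated under the integral sign.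
-/

open Real

noncomputable def phiDeriv (r : ℝ) : ℝ := -exp (-r) + cos r + sin r

lemma Phi_zero : Phi 0 = 0 := by simp [Phi]

lemma phiDeriv_zero : phiDeriv 0 = 0 := by simp [phiDeriv]

lemma hasDerivAt_Phi (r : ℝ) : HasDerivAt Phi (phiDeriv r) r := by
  have hexp : HasDerivAt (fun r : ℝ => exp (-r)) (-exp (-r)) r := by
    simpa using (hasDerivAt_id r).neg.exp
  exact ((hexp.add (hasDerivAt_sin r)).sub (hasDerivAt_cos r)).congr_deriv
    (by simp only [phiDeriv]; ring)

lemma hasDerivAt_Phi_mul (k x : ℝ) :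
    HasDerivAt (fun x => Phi (k * x)) (k * phiDeriv (k * x)) x :=
  ((hasDerivAt_Phi (k * x)).comp x ((hasDerivAt_id x).const_mul k)).congr_deriv (by ring)

@[fun_prop]
lemma continuous_Phi : Continuous Phi := by
  unfold Phi; fun_prop

@[fun_prop]
lemma continuous_phiDeriv : Continuous phiDeriv := by
  unfold phiDeriv; fun_prop

lemma abs_Phi_le {a r : ℝ} (ha : 0 ≤ a) (hr : -a ≤ r) : |Phi r| ≤ 3 * exp a := by
  have hexp : exp (-r) ≤ exp a := exp_le_exp.2 (by linarith)
  have hone : 1 ≤ exp a := one_le_exp ha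
  unfold Phi
  rw [abs_le]
  constructor <;> linarith [neg_one_le_sin r, sin_le_one r, neg_one_le_cos r, cos_le_one r,
    exp_pos (-r)]

lemma abs_phiDeriv_le {a r : ℝ} (ha : 0 ≤ a) (hr : -a ≤ r) : |phiDeriv r| ≤ 3 * exp a := by
  have hexp : exp (-r) ≤ exp a := exp_le_exp.2 (by linarith)
  have hone : 1 ≤ exp a := one_le_exp ha
  unfold phiDeriv
  rw [abs_le]
  constructor <;> linarith [neg_one_le_sin r, sin_le_one r, neg_one_le_cos r, cos_le_one r,
    exp_pos (-r)]

lemma exp_two_mul_mul_exp_neg_pow_four_le {t : ℝ} (ht : 0 < t) (k : ℝ) :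
    exp (2 * k) * exp (-k ^ 4 * t) ≤ exp (t + t⁻¹) * exp (-t * k ^ 2) := by
  rw [← exp_add, ← exp_add, exp_le_exp]
  have hgap : t * (t + t⁻¹ + -t * k ^ 2 - (2 * k + -k ^ 4 * t)) =
      t ^ 2 * (k ^ 2 - 1) ^ 2 + (t * k - 1) ^ 2 := by
    field_simp
    ring
  have hprod : 0 ≤ t * (t + t⁻¹ + -t * k ^ 2 - (2 * k + -k ^ 4 * t)) := hgap ▸ by positivity
  linarith [(mul_nonneg_iff_of_pos_left ht).1 hprod]

noncomputable def kernelBound (t k : ℝ) : ℝ := 9 * (exp (t + t⁻¹) * exp (-t * k ^ 2))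

lemma integrable_kernelBound {t : ℝ} (ht : 0 < t) : Integrable (kernelBound t) :=
  ((integrable_exp_neg_mul_sq ht).const_mul _).const_mul _

lemma abs_kernel_integrand_le {t x y k : ℝ} (ht : 0 < t) (hk : 0 ≤ k) (hx : |x| ≤ 1)
    (hy : 0 ≤ y) : |exp (-k ^ 4 * t) * Phi (k * x) * Phi (k * y)| ≤ kernelBound t k := by
  have hkx : -k ≤ k * x := by nlinarith [(abs_le.1 hx).1]
  have h1 := abs_Phi_le hk hkx
  have h2 : |Phi (k * y)| ≤ 3 := by
    simpa using abs_Phi_le le_rfl (by simpa using mul_nonneg hk hy)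
  have h3 : exp k ≤ exp (2 * k) := exp_le_exp.2 (by linarith)
  have h4 := exp_two_mul_mul_exp_neg_pow_four_le ht k
  rw [abs_mul, abs_mul, abs_of_pos (exp_pos _)]
  unfold kernelBound
  calc exp (-k ^ 4 * t) * |Phi (k * x)| * |Phi (k * y)|
      ≤ exp (-k ^ 4 * t) * (3 * exp (2 * k)) * 3 := by gcongr; linarith
    _ ≤ _ := by nlinarith

lemma abs_kernel_integrand_deriv_le {t x y k : ℝ} (ht : 0 < t) (hk : 0 ≤ k) (hx : |x| ≤ 1)
    (hy : 0 ≤ y) :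
    |exp (-k ^ 4 * t) * (k * phiDeriv (k * x)) * Phi (k * y)| ≤ kernelBound t k := by
  have hkx : -k ≤ k * x := by nlinarith [(abs_le.1 hx).1]
  have h1 := abs_phiDeriv_le hk hkx
  have h2 : |Phi (k * y)| ≤ 3 := by
    simpa using abs_Phi_le le_rfl (by simpa using mul_nonneg hk hy)
  have h3 : k * exp k ≤ exp (2 * k) := by
    rw [two_mul, exp_add]
    gcongr
    linarith [add_one_le_exp k]
  have h4 := exp_two_mul_mul_exp_neg_pow_four_le ht k
  have h5 : k * |phiDeriv (k * x)| ≤ 3 * exp (2 * k) := by nlinarith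
  rw [abs_mul, abs_mul, abs_mul, abs_of_pos (exp_pos _), abs_of_nonneg hk]
  unfold kernelBound
  calc exp (-k ^ 4 * t) * (k * |phiDeriv (k * x)|) * |Phi (k * y)|
      ≤ exp (-k ^ 4 * t) * (3 * exp (2 * k)) * 3 := by gcongr
    _ ≤ _ := by nlinarith

lemma ae_nonneg_restrict_Ioi : ∀ᵐ k ∂volume.restrict (Ioi (0:ℝ)), 0 ≤ k :=
  (ae_restrict_mem measurableSet_Ioi).mono fun _ hk => le_of_lt hk

noncomputable def kernelDeriv (t x y : ℝ) : ℝ :=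
  (1 / π) * ∫ k in Ioi (0:ℝ), exp (-k ^ 4 * t) * (k * phiDeriv (k * x)) * Phi (k * y)

lemma K_zero_left (t y : ℝ) : K t 0 y = 0 := by
  simp [K, Phi_zero]

lemma kernelDeriv_zero_left (t y : ℝ) : kernelDeriv t 0 y = 0 := by
  simp [kernelDeriv, phiDeriv_zero]

lemma abs_kernelDeriv_le {t x y : ℝ} (ht : 0 < t) (hx : |x| ≤ 1) (hy : 0 ≤ y) :
    |kernelDeriv t x y| ≤ (1 / π) * ∫ k in Ioi (0:ℝ), kernelBound t k := by
  rw [kernelDeriv, abs_mul, abs_of_pos (by positivity : (0:ℝ) < 1 / π)]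
  gcongr
  rw [← Real.norm_eq_abs]
  refine norm_integral_le_of_norm_le (integrable_kernelBound ht).integrableOn ?_
  filter_upwards [ae_nonneg_restrict_Ioi] with k hk
  exact abs_kernel_integrand_deriv_le ht hk hx hy

lemma hasDerivAt_K {t x y : ℝ} (ht : 0 < t) (hx : x ∈ Ioo (-1) 1) (hy : 0 ≤ y) :
    HasDerivAt (fun x => K t x y) (kernelDeriv t x y) x := by
  have hbound : Integrable (kernelBound t) (volume.restrict (Ioi 0)) :=
    (integrable_kernelBound ht).integrableOn
  have hint : Integrable (fun k => exp (-k ^ 4 * t) * Phi (k * x) * Phi (k * y))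
      (volume.restrict (Ioi 0)) :=
    hbound.mono' (Continuous.aestronglyMeasurable (by fun_prop))
      (ae_nonneg_restrict_Ioi.mono fun k hk =>
        abs_kernel_integrand_le ht hk (abs_le.2 ⟨hx.1.le, hx.2.le⟩) hy)
  have hderiv := hasDerivAt_integral_of_dominated_loc_of_deriv_le
    (F := fun x k => exp (-k ^ 4 * t) * Phi (k * x) * Phi (k * y))
    (F' := fun x k => exp (-k ^ 4 * t) * (k * phiDeriv (k * x)) * Phi (k * y))
    (Ioo_mem_nhds hx.1 hx.2)
    (Eventually.of_forall fun x' => Continuous.aestronglyMeasurable (by fun_prop)) hint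
    (Continuous.aestronglyMeasurable (by fun_prop))
    (ae_nonneg_restrict_Ioi.mono fun k hk x' hx' =>
      abs_kernel_integrand_deriv_le ht hk (abs_le.2 ⟨hx'.1.le, hx'.2.le⟩) hy)
    hbound
    (Eventually.of_forall fun k x' _ => ((hasDerivAt_Phi_mul k x').const_mul _).mul_const _)
  exact hderiv.2.const_mul (1 / π)

lemma stronglyMeasurable_K (t x : ℝ) : StronglyMeasurable (K t x) := by
  have hcont : Continuous fun p : ℝ × ℝ =>
      exp (-p.2 ^ 4 * t) * Phi (p.2 * x) * Phi (p.2 * p.1) := by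
    fun_prop
  exact (hcont.stronglyMeasurable.integral_prod_right' (ν := volume.restrict (Ioi 0))).const_mul _

theorem hasDerivAt_integral_mul_of_abs_deriv_le {α : Type*} [MeasurableSpace α] {μ : Measure α}
    {G G' : ℝ → α → ℝ} {f : α → ℝ} {s : Set ℝ} {x₀ C : ℝ} (hs : s ∈ nhds x₀)
    (hG_meas : ∀ x, AEStronglyMeasurable (G x) μ) (hG'_meas : AEStronglyMeasurable (G' x₀) μ)
    (hG_int : Integrable (fun y => G x₀ y * f y) μ)
    (hG' : ∀ᵐ y ∂μ, ∀ x ∈ s, |G' x y| ≤ C)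
    (hdiff : ∀ᵐ y ∂μ, ∀ x ∈ s, HasDerivAt (G · y) (G' x y) x) (hf : Integrable f μ) :
    HasDerivAt (fun x => ∫ y, G x y * f y ∂μ) (∫ y, G' x₀ y * f y ∂μ) x₀ := by
  refine (hasDerivAt_integral_of_dominated_loc_of_deriv_le (bound := fun y => C * |f y|) hs
    (Eventually.of_forall fun x => (hG_meas x).mul hf.aestronglyMeasurable) hG_int
    (hG'_meas.mul hf.aestronglyMeasurable) ?_ (hf.abs.const_mul C)
    (hdiff.mono fun y hy x hx => (hy x hx).mul_const (f y))).2
  filter_upwards [hG'] with y hy x hx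
  rw [norm_mul]
  exact mul_le_mul_of_nonneg_right (hy x hx) (norm_nonneg _)

/-- the kernel satisfies the clamped boundary conditions at `x = 0`, and hence
so does `u(t,x) = ∫₀^∞ K(t,x,y) f(y) dy` for bounded continuous integrable `f`. -/
theorem stmt1 :
    (∀ t > (0:ℝ), ∀ y ≥ (0:ℝ), K t 0 y = 0 ∧ deriv (fun x => K t x y) 0 = 0) ∧
    (∀ f : ℝ → ℝ, ContinuousOn f (Set.Ici 0) → (∃ M, ∀ x ≥ (0:ℝ), |f x| ≤ M) →
      IntegrableOn f (Set.Ioi 0) →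
      ∀ t > (0:ℝ),
        (∫ y in Set.Ioi (0:ℝ), K t 0 y * f y) = 0 ∧
        deriv (fun x => ∫ y in Set.Ioi (0:ℝ), K t x y * f y) 0 = 0) := by
  have hzero : (0:ℝ) ∈ Ioo (-1) 1 := by norm_num
  refine ⟨fun t ht y hy => ⟨K_zero_left t y, ?_⟩,
    fun f _ _ hf t ht => ⟨by simp [K_zero_left], ?_⟩⟩
  · rw [(hasDerivAt_K ht hzero hy).deriv, kernelDeriv_zero_left]
  have hderiv := hasDerivAt_integral_mul_of_abs_deriv_le (G := K t) (G' := kernelDeriv t)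
    (Ioo_mem_nhds hzero.1 hzero.2) (fun x => (stronglyMeasurable_K t x).aestronglyMeasurable)
    (by rw [funext (kernelDeriv_zero_left t)]; exact aestronglyMeasurable_const)
    (by simp [K_zero_left])
    (ae_nonneg_restrict_Ioi.mono fun y hy x hx =>
      abs_kernelDeriv_le ht (abs_le.2 ⟨hx.1.le, hx.2.le⟩) hy)
    (ae_nonneg_restrict_Ioi.mono fun y hy x hx => hasDerivAt_K ht hx hy) hf
  simpa [kernelDeriv_zero_left] using hderiv.deriv
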